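/- Over the alphabet Σ = {a,b,c}, the hyperproperty H1 = {P ⊆ Σ^ω | all pairs of words in P have the letter b at exactly the same positions} is not expressible by any nondeterministic Büchi automaton via resolvers: for every Büchi automaton A, if H1 ⊆ {A^f | f resolver of A} then H1 ≠ {A^f | f resolver of A}. -/

import Mathlib

open Filter

/-- A (nondeterministic) Büchi automaton over alphabet `σ` with state type `Q`:
initial state, total transition relation, and set of accepting states. -/
structure BAut (σ : Type) (Q : Type) where
  init : Q
  Δ : Q → σ → Q → Prop
  total : ∀ q a, ∃ q', Δ q a q'
  F : Q → Prop

namespace BAut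

variable {σ Q : Type}

/-- The last state of a history. -/
def hlast (A : BAut σ Q) (h : List (σ × Q)) : Q :=
  (h.getLast?.map Prod.snd).getD A.init

/-- A resolver: maps each history and next letter to a successor state consistent with Δ. -/
structure Resolver (A : BAut σ Q) where
  f : List (σ × Q) → σ → Q
  consistent : ∀ h a, A.Δ (A.hlast h) a (f h a)

/-- The history produced by a resolver on the first `n` letters of a word. -/
def Resolver.hist {A : BAut σ Q} (r : Resolver A) (w : ℕ → σ) : ℕ → List (σ × Q)
  | 0 => []
  | n + 1 => r.hist w n ++ [(w n, r.f (r.hist w n) (w n))]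

/-- The unique run induced by a resolver on a word. -/
def Resolver.run {A : BAut σ Q} (r : Resolver A) (w : ℕ → σ) : ℕ → Q
  | 0 => A.init
  | n + 1 => r.f (r.hist w n) (w n)

/-- Büchi acceptance: the run induced by `r` on `w` visits accepting states
infinitely often. -/
def Acc (A : BAut σ Q) (r : Resolver A) (w : ℕ → σ) : Prop :=
  ∃ᶠ n in atTop, A.F (r.run w n)

/-- `A^f`: the trace property (language) specified by `A` with resolver `f`. -/
def Lang (A : BAut σ Q) (r : Resolver A) : Set (ℕ → σ) := {w | A.Acc r w}

/-- The hyperproperty specified by `A`: the set of trace properties `A^f` for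
resolvers `f` of `A`. -/
def Hyper (A : BAut σ Q) : Set (Set (ℕ → σ)) := {P | ∃ r : Resolver A, A.Lang r = P}

end BAut

/-- `P` is a safety property: every word not in `P` has a finite prefix none of whose
extensions is in `P`. -/
def IsSafety {σ : Type} (P : Set (ℕ → σ)) : Prop :=
  ∀ w, w ∉ P → ∃ n : ℕ, ∀ w' : ℕ → σ, (∀ i < n, w' i = w i) → w' ∉ P

/-- `P` is a co-safety property: every word in `P` has a finite prefix all of whose
extensions are in `P`. -/
def IsCoSafety {σ : Type} (P : Set (ℕ → σ)) : Prop :=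
  ∀ w ∈ P, ∃ n : ℕ, ∀ w' : ℕ → σ, (∀ i < n, w' i = w i) → w' ∈ P

/-- The three-letter alphabet `{a, b, c}`. -/
inductive Ltr3 where
  | a | b | c
  deriving DecidableEq

instance : Fintype Ltr3 :=
  ⟨{Ltr3.a, Ltr3.b, Ltr3.c}, fun x => by cases x <;> simp⟩

/-- The hyperproperty `H1`: all trace properties `P` such that all pairs of words in
`P` have the letter `b` at exactly the same positions. -/
def H1 : Set (Set (ℕ → Ltr3)) :=
  {P | ∀ w ∈ P, ∀ w' ∈ P, ∀ i : ℕ, w i = Ltr3.b ↔ w' i = Ltr3.b}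

namespace BAut

variable {σ Q : Type}

/-- Combine two resolvers, branching on the first letter. -/
def comb (A : BAut Ltr3 Q) (r1 r2 : Resolver A) : Resolver A where
  f h x := if (h.head?.map Prod.fst).getD x = Ltr3.a then r1.f h x else r2.f h x
  consistent h a := by
    split
    · exact r1.consistent h a
    · exact r2.consistent h a

lemma hist_head {A : BAut σ Q} (r : Resolver A) (w : ℕ → σ) :
    ∀ n, (r.hist w (n + 1)).head? = some (w 0, r.f [] (w 0)) := by
  intro n
  induction n with
  | zero => simp [Resolver.hist]
  | succ n ih =>
    rw [Resolver.hist, List.head?_append]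
    simp [ih]

lemma comb_hist_a {A : BAut Ltr3 Q} (r1 r2 : Resolver A) (w : ℕ → Ltr3)
    (hw : w 0 = Ltr3.a) : ∀ n, (A.comb r1 r2).hist w n = r1.hist w n := by
  intro n
  induction n with
  | zero => rfl
  | succ n ih =>
    rw [Resolver.hist, Resolver.hist, ih]
    have hf : (A.comb r1 r2).f (r1.hist w n) (w n) = r1.f (r1.hist w n) (w n) := by
      show (if _ = Ltr3.a then _ else _) = _
      cases n with
      | zero => simp [Resolver.hist, hw]
      | succ m => rw [hist_head]; simp [hw]
    rw [hf]

lemma comb_hist_na {A : BAut Ltr3 Q} (r1 r2 : Resolver A) (w : ℕ → Ltr3)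
    (hw : w 0 ≠ Ltr3.a) : ∀ n, (A.comb r1 r2).hist w n = r2.hist w n := by
  intro n
  induction n with
  | zero => rfl
  | succ n ih =>
    rw [Resolver.hist, Resolver.hist, ih]
    have hf : (A.comb r1 r2).f (r2.hist w n) (w n) = r2.f (r2.hist w n) (w n) := by
      show (if _ = Ltr3.a then _ else _) = _
      cases n with
      | zero => simp [Resolver.hist, hw]
      | succ m => rw [hist_head]; simp [hw]
    rw [hf]

lemma comb_run_a {A : BAut Ltr3 Q} (r1 r2 : Resolver A) (w : ℕ → Ltr3)
    (hw : w 0 = Ltr3.a) : ∀ n, (A.comb r1 r2).run w n = r1.run w n := by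
  intro n
  cases n with
  | zero => rfl
  | succ n =>
    show (A.comb r1 r2).f _ _ = r1.f _ _
    rw [comb_hist_a r1 r2 w hw]
    show (if _ = Ltr3.a then _ else _) = _
    cases n with
    | zero => simp [Resolver.hist, hw]
    | succ m => rw [hist_head]; simp [hw]

lemma comb_run_na {A : BAut Ltr3 Q} (r1 r2 : Resolver A) (w : ℕ → Ltr3)
    (hw : w 0 ≠ Ltr3.a) : ∀ n, (A.comb r1 r2).run w n = r2.run w n := by
  intro n
  cases n with
  | zero => rfl
  | succ n =>
    show (A.comb r1 r2).f _ _ = r2.f _ _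
    rw [comb_hist_na r1 r2 w hw]
    show (if _ = Ltr3.a then _ else _) = _
    cases n with
    | zero => simp [Resolver.hist, hw]
    | succ m => rw [hist_head]; simp [hw]

end BAut

/-- `H1` is not expressible by any nondeterministic Büchi automaton
via resolvers: if `H1 ⊆ H_A` then `H1 ≠ H_A`. -/
theorem H1_not_expressible {Q : Type} [Fintype Q] (A : BAut Ltr3 Q)
    (hsub : H1 ⊆ A.Hyper) : H1 ≠ A.Hyper := by
  intro heq
  -- two singleton members of H1
  set w1 : ℕ → Ltr3 := fun n => if n = 0 then Ltr3.a else Ltr3.b with hw1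
  set w2 : ℕ → Ltr3 := fun _ => Ltr3.c with hw2
  have h1 : ({w1} : Set (ℕ → Ltr3)) ∈ H1 := by
    intro w hw w' hw' i
    simp only [Set.mem_singleton_iff] at hw hw'
    subst hw hw'; rfl
  have h2 : ({w2} : Set (ℕ → Ltr3)) ∈ H1 := by
    intro w hw w' hw' i
    simp only [Set.mem_singleton_iff] at hw hw'
    subst hw hw'; rfl
  obtain ⟨r1, hr1⟩ := hsub h1
  obtain ⟨r2, hr2⟩ := hsub h2
  set g := A.comb r1 r2 with hg
  have hLg : A.Lang g ∈ A.Hyper := ⟨g, rfl⟩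
  rw [← heq] at hLg
  have hw1a : w1 0 = Ltr3.a := rfl
  have hw2a : w2 0 ≠ Ltr3.a := by simp [hw2]
  have hmem1 : w1 ∈ A.Lang g := by
    show A.Acc g w1
    have : ∀ n, g.run w1 n = r1.run w1 n := BAut.comb_run_a r1 r2 w1 hw1a
    have hacc : A.Acc r1 w1 := by
      have : w1 ∈ A.Lang r1 := by rw [hr1]; rfl
      exact this
    unfold BAut.Acc at hacc ⊢
    simpa only [this] using hacc
  have hmem2 : w2 ∈ A.Lang g := by
    show A.Acc g w2
    have : ∀ n, g.run w2 n = r2.run w2 n := BAut.comb_run_na r1 r2 w2 hw2a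
    have hacc : A.Acc r2 w2 := by
      have : w2 ∈ A.Lang r2 := by rw [hr2]; rfl
      exact this
    unfold BAut.Acc at hacc ⊢
    simpa only [this] using hacc
  have := hLg w1 hmem1 w2 hmem2 1
  simp [hw1, hw2] at this
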